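/- Over an algebraically closed field F of characteristic p ≥ 3, every irreducible representation of sl_2(F) whose associated character χ is nonzero has dimension exactly p. -/

import Mathlib

/-!
Write `E`, `H`, `F` for the actions of `e`, `h`, `f`, so that `E ^ p`, `F ^ p` and `H ^ p - H`
are the scalars `χ e ^ p`, `χ f ^ p`, `χ h ^ p`. For an `H`-eigenvector `v` of eigenvalue `μ`,
the span of the `F`-string `v, F v, F² v, …` is stable under `H` and `F`, and also under `E` as
soon as it contains `E v`, since `E F^(k+1) v = F^(k+1) E v + (k+1)(μ-k) F^k v`. By irreducibility
it is then all of `V`; as `F ^ p` is a scalar, it is spanned by `v, …, F^(p-1) v`, which are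
`H`-eigenvectors with the distinct eigenvalues `μ - 2k`. So if none of them vanishes, `dim V = p`.

If `χ f ≠ 0`, `F` is invertible. `V` is spanned by the finitely many `F^i E^j v₀` (`i, j < p`),
so we may take for `v` a common eigenvector of the commuting operators `H` and `F E`; then
`E v = (χ f ^ p)⁻¹ F^(p-1) (F E v)` lies in the string. If `χ e ≠ 0`, exchange `e` and `f`.
Otherwise `χ h ≠ 0` and `E` is nilpotent, and we take `v` primitive (`E v = 0`): if
`F^(k+1) v = 0` with `k + 1 < p`, then `μ = k` lies in the prime field, whereas
`μ ^ p - μ = χ h ^ p ≠ 0`.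
-/

open Module Polynomial

namespace Module.End

variable {K V : Type*} [Field K] [AddCommGroup V] [Module K V]

theorem exists_hasEigenvalue_of_aeval_eq_zero [IsAlgClosed K] [Nontrivial V] {T : End K V}
    {q : K[X]} (hq : q.Monic) (hT : aeval T q = 0) : ∃ μ, T.HasEigenvalue μ := by
  by_contra! hT'
  have hinj : ∀ s : Multiset K, Function.Injective (aeval T (s.map (X - C ·)).prod) := by
    intro s
    induction s using Multiset.induction with
    | empty => simpa [coe_one] using Function.injective_id
    | cons a s ih =>
      have ha : Function.Injective (T - a • 1 : End K V) := by
        rw [← LinearMap.ker_eq_bot, ← eigenspace_def]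
        exact not_not.mp (hT' a)
      simpa [Algebra.algebraMap_eq_smul_one, coe_mul] using ha.comp ih
  have := hinj q.roots
  rw [← (IsAlgClosed.splits q).eq_prod_roots_of_monic hq, hT] at this
  obtain ⟨x, hx⟩ := exists_ne (0 : V)
  exact hx (this rfl)

theorem exists_hasEigenvector_of_commute [IsAlgClosed K] [FiniteDimensional K V] {S T : End K V}
    (hST : Commute S T) {μ : K} (hμ : S.HasEigenvalue μ) :
    ∃ (v : V) (τ : K), S.HasEigenvector μ v ∧ T v = τ • v := by
  have hmaps : Set.MapsTo T (S.eigenspace μ) (S.eigenspace μ) :=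
    mapsTo_genEigenspace_of_comm hST μ 1
  have : Nontrivial (S.eigenspace μ) := Submodule.nontrivial_iff_ne_bot.mpr hμ
  obtain ⟨τ, hτ⟩ := exists_eigenvalue (T.restrict hmaps)
  obtain ⟨⟨v, hv⟩, hvτ⟩ := hτ.exists_hasEigenvector
  refine ⟨v, τ, ⟨hv, ?_⟩, ?_⟩
  · simpa using hvτ.2
  · exact congrArg Subtype.val hvτ.apply_eq_smul

theorem pow_eq_smul_pow_mod {R M : Type*} [CommSemiring R] [AddCommMonoid M] [Module R M]
    {T : End R M} {p : ℕ} {c : R} (hT : T ^ p = c • 1) (n : ℕ) :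
    T ^ n = c ^ (n / p) • T ^ (n % p) := by
  conv_lhs => rw [← Nat.div_add_mod n p, pow_add, pow_mul, hT, _root_.smul_pow, one_pow,
    smul_mul_assoc, one_mul]

theorem pow_apply_mem_span_range_fin {R M : Type*} [CommSemiring R] [AddCommMonoid M]
    [Module R M] {T : End R M} {p : ℕ} (hp : p ≠ 0) {c : R} (hT : T ^ p = c • 1) (v : M)
    (n : ℕ) : (T ^ n) v ∈ Submodule.span R (Set.range fun k : Fin p => (T ^ (k : ℕ)) v) := by
  rw [pow_eq_smul_pow_mod hT, LinearMap.smul_apply]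
  exact Submodule.smul_mem _ _
    (Submodule.subset_span ⟨⟨n % p, Nat.mod_lt n (Nat.pos_of_ne_zero hp)⟩, rfl⟩)

theorem pow_apply_mem_span_range_pow_apply {R M : Type*} [CommSemiring R] [AddCommMonoid M]
    [Module R M] (T : End R M) {v w : M}
    (hw : w ∈ Submodule.span R (Set.range fun n : ℕ => (T ^ n) v)) (k : ℕ) :
    (T ^ k) w ∈ Submodule.span R (Set.range fun n : ℕ => (T ^ n) v) := by
  refine (Submodule.span_le (p := (Submodule.span R _).comap (T ^ k))).mpr ?_ hw
  rintro _ ⟨n, rfl⟩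
  exact Submodule.subset_span ⟨k + n, by simp [pow_add, Module.End.mul_apply]⟩

theorem exists_hasEigenvalue_of_pow_sub_self_eq_smul_one [IsAlgClosed K] [Nontrivial V]
    {T : End K V} {p : ℕ} (hp : 2 ≤ p) {b : K} (hT : T ^ p - T = b • 1) :
    ∃ μ, T.HasEigenvalue μ := by
  refine exists_hasEigenvalue_of_aeval_eq_zero (q := X ^ p - X - C b) ?_ ?_
  · rw [sub_sub]
    exact monic_X_pow_sub (by rw [degree_X_add_C]; exact_mod_cast hp)
  · simp [hT, Algebra.algebraMap_eq_smul_one]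

theorem HasEigenvector.pow_sub_self_eq {T : End K V} {μ : K} {v : V} (hv : T.HasEigenvector μ v)
    {p : ℕ} {b : K} (hT : T ^ p - T = b • 1) : μ ^ p - μ = b := by
  have := congr($hT v)
  rw [LinearMap.sub_apply, hv.pow_apply, hv.apply_eq_smul, ← sub_smul, LinearMap.smul_apply,
    one_apply] at this
  exact smul_left_injective K hv.2 this

end Module.End

open LieModule

section

variable {K L V : Type*} [Field K] [LieRing L] [LieAlgebra K L]
  [AddCommGroup V] [Module K V] [LieRingModule L V] [LieModule K L V]

theorem LieModule.span_eq_top_of_lie_mem_span [IsIrreducible K L V] {s : Set L}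
    (hs : Submodule.span K s = ⊤) {S : Set V} (hS : Submodule.span K S ≠ ⊥)
    (hsS : ∀ x ∈ s, ∀ m ∈ S, ⁅x, m⁆ ∈ Submodule.span K S) :
    Submodule.span K S = ⊤ := by
  set W := Submodule.span K S
  have hsW : s ⊆ (W.compatibleMaps W).comap (toEnd K L V : L →ₗ[K] Module.End K V) :=
    fun x hx => show W ≤ W.comap (toEnd K L V x) from Submodule.span_le.mpr (hsS x hx)
  have hLW : ∀ (x : L) (m : V), m ∈ W → ⁅x, m⁆ ∈ W := fun x m hm =>
    Submodule.span_le.mpr hsW (hs ▸ Submodule.mem_top : x ∈ Submodule.span K s) hm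
  obtain ⟨N, hNW⟩ := (W.exists_lieSubmodule_coe_eq_iff L).mpr hLW
  have hN : N ≠ ⊥ := by
    rintro rfl
    exact hS (by simpa using hNW.symm)
  rw [← hNW, (IsSimpleOrder.eq_bot_or_eq_top N).resolve_left hN, LieSubmodule.top_toSubmodule]

lemma IsSl2Triple.of_lie_eq_smul {h e f : L} (h2 : (2 : K) ≠ 0) (hhe : ⁅h, e⁆ = (2 : K) • e)
    (hhf : ⁅h, f⁆ = (-2 : K) • f) (hef : ⁅e, f⁆ = h)
    (hne : e ≠ 0 ∨ h ≠ 0 ∨ f ≠ 0) : IsSl2Triple h e f where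
  h_ne_zero := by
    rintro rfl
    simp only [zero_lie, eq_comm (a := (0 : L)), smul_eq_zero, h2, neg_eq_zero, false_or]
      at hhe hhf
    simp [hhe, hhf] at hne
  lie_e_f := hef
  lie_h_e_nsmul := by rw [hhe, ofNat_smul_eq_nsmul]
  lie_h_f_nsmul := by rw [hhf, neg_smul, ofNat_smul_eq_nsmul]

namespace IsSl2Triple.HasPrimitiveVectorWith

variable {h e f : L} {t : IsSl2Triple h e f} {v : V} {μ : K}

lemma pow_toEnd_f_ne_zero_of_lt {p : ℕ} [CharP K p] (P : t.HasPrimitiveVectorWith v μ)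
    (hμ : ∀ n : ℕ, μ ≠ n) {k : ℕ} (hk : k < p) : (toEnd K L V f ^ k) v ≠ 0 := by
  induction k with
  | zero => simpa using P.ne_zero
  | succ k ih =>
    intro hk0
    have := P.lie_e_pow_succ_toEnd_f k
    rw [hk0, lie_zero, eq_comm, smul_eq_zero_iff_left (ih (by omega)), mul_eq_zero,
      sub_eq_zero] at this
    refine this.elim (fun hk1 => ?_) (hμ k)
    exact Nat.not_dvd_of_pos_of_lt k.succ_pos hk ((CharP.cast_eq_zero_iff K p _).mp
      (by exact_mod_cast hk1))

end IsSl2Triple.HasPrimitiveVectorWith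

namespace IsSl2Triple

variable {h e f : L} (t : IsSl2Triple h e f) {m : V} {μ : K}
include t

lemma lie_h_pow_toEnd_f (hm : ⁅h, m⁆ = μ • m) (n : ℕ) :
    ⁅h, (toEnd K L V f ^ n) m⁆ = (μ - 2 * n) • (toEnd K L V f ^ n) m := by
  have := t.symm.lie_h_pow_toEnd_e (show ⁅-h, m⁆ = (-μ) • m by rw [neg_lie, hm, neg_smul]) n
  rw [neg_lie, neg_eq_iff_eq_neg, ← neg_smul] at this
  rw [this]
  congr 1
  ring

lemma lie_e_pow_succ_toEnd_f (hm : ⁅h, m⁆ = μ • m) (n : ℕ) :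
    ⁅e, (toEnd K L V f ^ (n + 1)) m⁆ =
      (toEnd K L V f ^ (n + 1)) ⁅e, m⁆ + ((n + 1) * (μ - n)) • (toEnd K L V f ^ n) m := by
  induction n with
  | zero => simp [leibniz_lie e f m, t.lie_e_f, hm, add_comm]
  | succ n ih =>
    have hf (k : ℕ) (w : V) : ⁅f, (toEnd K L V f ^ k) w⁆ = (toEnd K L V f ^ (k + 1)) w := by
      simp [pow_succ']
    rw [← hf (n + 1), leibniz_lie, t.lie_e_f, t.lie_h_pow_toEnd_f hm, ih, lie_add, lie_smul, hf,
      hf]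
    push_cast
    module

lemma commute_toEnd_h_f_mul_e : Commute (toEnd K L V h) (toEnd K L V f * toEnd K L V e) := by
  ext m
  simp [leibniz_lie h f, leibniz_lie h e, t.lie_lie_smul_f K, t.lie_h_e_smul K]

variable [IsIrreducible K L V] (hspan : Submodule.span K {e, h, f} = ⊤)
include hspan

theorem span_range_pow_toEnd_f_eq_top {v : V} (hv0 : v ≠ 0) (hv : ⁅h, v⁆ = μ • v)
    (hev : ⁅e, v⁆ ∈ Submodule.span K (Set.range fun n : ℕ => (toEnd K L V f ^ n) v)) :
    Submodule.span K (Set.range fun n : ℕ => (toEnd K L V f ^ n) v) = ⊤ := by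
  set W := Submodule.span K (Set.range fun n : ℕ => (toEnd K L V f ^ n) v)
  have hmem (n : ℕ) : (toEnd K L V f ^ n) v ∈ W := Submodule.subset_span ⟨n, rfl⟩
  refine LieModule.span_eq_top_of_lie_mem_span hspan ?_ ?_
  · exact (Submodule.ne_bot_iff _).mpr ⟨v, by simpa using hmem 0, hv0⟩
  rintro x (rfl | rfl | rfl) _ ⟨n, rfl⟩
  · cases n with
    | zero => simpa using hev
    | succ n =>
      rw [t.lie_e_pow_succ_toEnd_f hv]
      exact add_mem (Module.End.pow_apply_mem_span_range_pow_apply _ hev _)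
        (Submodule.smul_mem _ _ (hmem n))
  · rw [t.lie_h_pow_toEnd_f hv]
    exact Submodule.smul_mem _ _ (hmem n)
  · simpa [pow_succ'] using hmem (n + 1)

theorem finite_of_pow_toEnd_e_f_eq_smul_one {p : ℕ} (hp : p ≠ 0) {a c : K}
    (he : toEnd K L V e ^ p = a • 1) (hf : toEnd K L V f ^ p = c • 1) {v : V} (hv0 : v ≠ 0)
    (hv : ⁅h, v⁆ = μ • v) :
    Module.Finite K V := by
  set g : ℕ × ℕ → V := fun ij => (toEnd K L V f ^ ij.1) ((toEnd K L V e ^ ij.2) v)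
  have hmem (i j : ℕ) :
      (toEnd K L V f ^ i) ((toEnd K L V e ^ j) v) ∈ Submodule.span K (Set.range g) :=
    Submodule.subset_span ⟨(i, j), rfl⟩
  have htop : Submodule.span K (Set.range g) = ⊤ := by
    refine LieModule.span_eq_top_of_lie_mem_span hspan ?_ ?_
    · exact (Submodule.ne_bot_iff _).mpr ⟨v, by simpa using hmem 0 0, hv0⟩
    rintro x (rfl | rfl | rfl) _ ⟨⟨i, j⟩, rfl⟩ <;> simp only [g]
    · cases i with
      | zero => simpa [pow_succ'] using hmem 0 (j + 1)
      | succ i =>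
        rw [t.lie_e_pow_succ_toEnd_f (t.lie_h_pow_toEnd_e hv j)]
        refine add_mem ?_ (Submodule.smul_mem _ _ (hmem i j))
        simpa [pow_succ'] using hmem (i + 1) (j + 1)
    · rw [t.lie_h_pow_toEnd_f (t.lie_h_pow_toEnd_e hv j)]
      exact Submodule.smul_mem _ _ (hmem i j)
    · simpa [pow_succ'] using hmem (i + 1) j
  have hfin : Submodule.span K (Set.range fun ij : Fin p × Fin p => g (ij.1, ij.2)) = ⊤ := by
    refine top_unique (htop ▸ Submodule.span_le.mpr ?_)
    rintro _ ⟨⟨i, j⟩, rfl⟩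
    simp only [g, Module.End.pow_eq_smul_pow_mod hf i, Module.End.pow_eq_smul_pow_mod he j,
      LinearMap.smul_apply, map_smul, SetLike.mem_coe]
    refine Submodule.smul_mem _ _ (Submodule.smul_mem _ _ (Submodule.subset_span ?_))
    exact ⟨(⟨i % p, Nat.mod_lt i (by omega)⟩, ⟨j % p, Nat.mod_lt j (by omega)⟩), rfl⟩
  exact Module.finite_def.mpr (hfin ▸ Submodule.fg_span (Set.finite_range _))

variable {p : ℕ} [CharP K p] [Fact p.Prime]

theorem finrank_eq_of_lie_e_mem_span (hp : p ≠ 2) {c : K}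
    (hf : toEnd K L V f ^ p = c • 1) {v : V} (hv : ⁅h, v⁆ = μ • v)
    (hev : ⁅e, v⁆ ∈ Submodule.span K (Set.range fun n : ℕ => (toEnd K L V f ^ n) v))
    (hne : ∀ k < p, (toEnd K L V f ^ k) v ≠ 0) : finrank K V = p := by
  have hp0 : p ≠ 0 := (Fact.out : p.Prime).ne_zero
  have h2 : (2 : K) ≠ 0 := Ring.two_ne_zero (by rwa [ringChar.eq K p])
  have hli : LinearIndependent K fun k : Fin p => (toEnd K L V f ^ (k : ℕ)) v := by
    refine Module.End.eigenvectors_linearIndependent' (toEnd K L V h)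
      (fun k : Fin p => μ - 2 * (k : ℕ)) ?_ _ fun k => ⟨?_, hne k k.2⟩
    · intro k l hkl
      have : ((k : ℕ) : K) = (l : ℕ) := by simpa [h2] using hkl
      exact Fin.ext (CharP.natCast_injOn_Iio K p k.2 l.2 this)
    · exact Module.End.mem_eigenspace_iff.mpr (t.lie_h_pow_toEnd_f hv k)
  have htop := t.span_range_pow_toEnd_f_eq_top hspan (by simpa using hne 0 (by omega)) hv hev
  have hbasis : Submodule.span K (Set.range fun k : Fin p => (toEnd K L V f ^ (k : ℕ)) v) = ⊤ :=
    top_unique (htop ▸ Submodule.span_le.mpr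
      (Set.range_subset_iff.mpr (Module.End.pow_apply_mem_span_range_fin hp0 hf v)))
  rw [finrank_eq_card_basis (Basis.mk hli hbasis.ge), Fintype.card_fin]

variable [IsAlgClosed K]

theorem finrank_eq_of_pow_toEnd_f_ne_zero (hp : p ≠ 2) {a b c : K}
    (he : toEnd K L V e ^ p = a • 1) (hh : toEnd K L V h ^ p - toEnd K L V h = b • 1)
    (hf : toEnd K L V f ^ p = c • 1) (hc : c ≠ 0) : finrank K V = p := by
  have : Nontrivial V := (LieSubmodule.nontrivial_iff K L V).mp inferInstance
  obtain ⟨μ₀, hμ₀⟩ :=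
    Module.End.exists_hasEigenvalue_of_pow_sub_self_eq_smul_one (Fact.out : p.Prime).two_le hh
  obtain ⟨v₀, hv₀⟩ := hμ₀.exists_hasEigenvector
  have := t.finite_of_pow_toEnd_e_f_eq_smul_one hspan (Fact.out : p.Prime).ne_zero he hf hv₀.2
    hv₀.apply_eq_smul
  obtain ⟨v, τ, hv, hτ⟩ :=
    Module.End.exists_hasEigenvector_of_commute t.commute_toEnd_h_f_mul_e hμ₀
  have hp1 : p - 1 + 1 = p := Nat.sub_add_cancel (Fact.out : p.Prime).one_le
  refine t.finrank_eq_of_lie_e_mem_span hspan hp hf hv.apply_eq_smul ?_ fun k hk hk0 => ?_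
  · have : ⁅e, v⁆ = (c⁻¹ * τ) • (toEnd K L V f ^ (p - 1)) v := calc
      ⁅e, v⁆ = c⁻¹ • (toEnd K L V f ^ p) ⁅e, v⁆ := by
        rw [hf, LinearMap.smul_apply, Module.End.one_apply, smul_smul, inv_mul_cancel₀ hc,
          one_smul]
      _ = c⁻¹ • (toEnd K L V f ^ (p - 1)) ((toEnd K L V f * toEnd K L V e) v) := by
        rw [← hp1, pow_succ, Module.End.mul_apply, Module.End.mul_apply, hp1]
        simp only [toEnd_apply_apply]
      _ = (c⁻¹ * τ) • (toEnd K L V f ^ (p - 1)) v := by rw [hτ, map_smul, smul_smul]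
    rw [this]
    exact Submodule.smul_mem _ _ (Submodule.subset_span ⟨p - 1, rfl⟩)
  · have := congr($hf v)
    rw [← Nat.sub_add_cancel hk.le, pow_add, Module.End.mul_apply, hk0, map_zero,
      LinearMap.smul_apply, Module.End.one_apply, eq_comm, smul_eq_zero] at this
    exact hv.2 (this.resolve_left hc)

theorem finrank_eq_of_pow_toEnd_e_eq_zero (hp : p ≠ 2) {b c : K}
    (he : toEnd K L V e ^ p = 0) (hh : toEnd K L V h ^ p - toEnd K L V h = b • 1) (hb : b ≠ 0)
    (hf : toEnd K L V f ^ p = c • 1) : finrank K V = p := by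
  have : Nontrivial V := (LieSubmodule.nontrivial_iff K L V).mp inferInstance
  obtain ⟨μ₀, hμ₀⟩ :=
    Module.End.exists_hasEigenvalue_of_pow_sub_self_eq_smul_one (Fact.out : p.Prime).two_le hh
  obtain ⟨v₀, hv₀⟩ := hμ₀.exists_hasEigenvector
  obtain ⟨j, hj, hj1⟩ := Nat.exists_not_and_succ_of_not_zero_of_exists
    (p := fun n => (toEnd K L V e ^ n) v₀ = 0) (by simpa using hv₀.2) ⟨p, by simp [he]⟩
  have P : t.HasPrimitiveVectorWith ((toEnd K L V e ^ j) v₀) (μ₀ + 2 * j) :=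
    ⟨hj, t.lie_h_pow_toEnd_e hv₀.apply_eq_smul j, by simpa [pow_succ'] using hj1⟩
  have hμ : ∀ n : ℕ, μ₀ + 2 * j ≠ n := by
    intro n hn
    have := Module.End.HasEigenvector.pow_sub_self_eq
      ⟨Module.End.mem_eigenspace_iff.mpr P.lie_h, P.ne_zero⟩ hh
    rw [hn, ← frobenius_def, map_natCast, sub_self] at this
    exact hb this.symm
  exact t.finrank_eq_of_lie_e_mem_span hspan hp hf P.lie_h (by rw [P.lie_e]; exact zero_mem _)
    fun k hk => P.pow_toEnd_f_ne_zero_of_lt hμ hk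

end IsSl2Triple
end

theorem sl2_irreducible_dim_p_general {F : Type*} [Field F] [IsAlgClosed F] {p : ℕ} [CharP F p]
    (hp : 3 ≤ p) {L : Type*} [LieRing L] [LieAlgebra F L]
    (e h f : L)
    (hhe : ⁅h, e⁆ = (2 : F) • e) (hhf : ⁅h, f⁆ = (-2 : F) • f) (hef : ⁅e, f⁆ = h)
    (hspan : Submodule.span F ({e, h, f} : Set L) = ⊤)
    (V : Type*) [AddCommGroup V] [Module F V] [LieRingModule L V] [LieModule F L V]
    [LieModule.IsIrreducible F L V]
    (χ : L →ₗ[F] F)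
    (hχe : (LieModule.toEnd F L V e) ^ p = χ e ^ p • (1 : Module.End F V))
    (hχh : (LieModule.toEnd F L V h) ^ p - LieModule.toEnd F L V h
        = χ h ^ p • (1 : Module.End F V))
    (hχf : (LieModule.toEnd F L V f) ^ p = χ f ^ p • (1 : Module.End F V))
    (hχ : χ ≠ 0) :
    Module.finrank F V = p := by
  have hprime : p.Prime := CharP.char_is_prime_of_two_le F p (by omega)
  have : Fact p.Prime := ⟨hprime⟩
  have hp2 : p ≠ 2 := by omega
  have hχ' : χ e ≠ 0 ∨ χ h ≠ 0 ∨ χ f ≠ 0 := by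
    by_contra! h0
    exact hχ (LinearMap.ext_on hspan (by rintro _ (rfl | rfl | rfl) <;> simp [h0]))
  have t : IsSl2Triple h e f :=
    .of_lie_eq_smul (Ring.two_ne_zero (by rwa [ringChar.eq F p])) hhe hhf hef
      (by contrapose! hχ'; simp [hχ'])
  rcases ne_or_eq (χ f) 0 with hf | hf
  · exact t.finrank_eq_of_pow_toEnd_f_ne_zero hspan hp2 hχe hχh hχf (pow_ne_zero p hf)
  rcases ne_or_eq (χ e) 0 with he | he
  · have hspan' : Submodule.span F ({f, -h, e} : Set L) = ⊤ := by
      rw [← hspan]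
      simp only [Submodule.span_insert, ← Set.neg_singleton, Submodule.span_neg, sup_comm,
        sup_assoc]
    have hχh' : toEnd F L V (-h) ^ p - toEnd F L V (-h) = (-χ h ^ p) • 1 := by
      rw [map_neg, (hprime.odd_of_ne_two hp2).neg_pow, neg_sub_neg, ← neg_sub, hχh, neg_smul]
    exact t.symm.finrank_eq_of_pow_toEnd_f_ne_zero hspan' hp2 hχf hχh' hχe (pow_ne_zero p he)
  have hh : χ h ≠ 0 := by simpa [he, hf] using hχ'
  refine t.finrank_eq_of_pow_toEnd_e_eq_zero hspan hp2 ?_ hχh (pow_ne_zero p hh) hχf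
  rw [hχe, he, zero_pow hprime.ne_zero, zero_smul]

/-- Rudakov–Shafarevich: over an algebraically closed field `F` of characteristic
`p ≥ 3`, every irreducible representation of `sl₂(F)` whose associated character `χ` is nonzero
has dimension exactly `p`.  Here `sl₂(F)` is presented by its standard basis `e, h, f`, and the
character `χ` is determined by the action of the central elements `x^p - x^[p]` of `U(sl₂)`,
via the standard restricted structure `e^[p] = 0`, `h^[p] = h`, `f^[p] = 0`. -/
theorem sl2_irreducible_dim_p {F : Type*} [Field F] [IsAlgClosed F] {p : ℕ} [CharP F p]
    (hp : 3 ≤ p) {L : Type*} [LieRing L] [LieAlgebra F L]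
    (e h f : L)
    (hhe : ⁅h, e⁆ = (2 : F) • e) (hhf : ⁅h, f⁆ = (-2 : F) • f) (hef : ⁅e, f⁆ = h)
    (hspan : Submodule.span F ({e, h, f} : Set L) = ⊤)
    (hdim : Module.finrank F L = 3)
    (V : Type*) [AddCommGroup V] [Module F V] [LieRingModule L V] [LieModule F L V]
    [LieModule.IsIrreducible F L V]
    (χ : L →ₗ[F] F)
    (hχe : (LieModule.toEnd F L V e) ^ p = χ e ^ p • (1 : Module.End F V))
    (hχh : (LieModule.toEnd F L V h) ^ p - LieModule.toEnd F L V h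
        = χ h ^ p • (1 : Module.End F V))
    (hχf : (LieModule.toEnd F L V f) ^ p = χ f ^ p • (1 : Module.End F V))
    (hχ : χ ≠ 0) :
    Module.finrank F V = p :=
  sl2_irreducible_dim_p_general hp e h f hhe hhf hef hspan V χ hχe hχh hχf hχ
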